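/- arXiv:1509.03400 — 9 statements merged into one kernel-verified Lean document; each statement's English description precedes it below -/
import Mathlib

section
/- Let N ≥ 5 be an integer, let p, q, r', s be integers with ps − Nqr' = 1 (so that γ = (p q; Nr' s) ∈ Γ₀(N)), and suppose τ is a complex number with positive imaginary part satisfying Nsτ² − (Nr' + Nq)τ + p = 0 (the fixed-point equation of the matrix γ·W_N acting on the upper half plane, where W_N = (0 −1; N 0)). Then r' = q, and consequently the binary quadratic form Q_τ = [sN, −2qN, p] has discriminant (2qN)² − 4(sN)p = −4N. -/
/-- Let `N ≥ 5`, let `γ = (p q; Nr' s) ∈ Γ₀(N)` and suppose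
`τ` in the upper half plane satisfies the fixed-point equation
`Nsτ² - (Nr' + Nq)τ + p = 0` of `γ·W_N`. Then `r' = q`, and consequently the
quadratic form `Q_τ = [sN, -2qN, p]` has discriminant `(2qN)² - 4(sN)p = -4N`. -/
theorem fixed_point_full_AtkinLehner_discriminant
    (N : ℕ) (hN : 5 ≤ N) (p q r' s : ℤ)
    (hdet : p * s - (N : ℤ) * q * r' = 1)
    (τ : ℂ) (hτ : 0 < τ.im)
    (heq : (N : ℂ) * (s : ℂ) * τ ^ 2 - ((N : ℂ) * (r' : ℂ) + (N : ℂ) * (q : ℂ)) * τ + (p : ℂ) = 0) :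
    r' = q ∧ (2 * q * (N : ℤ)) ^ 2 - 4 * (s * (N : ℤ)) * p = -(4 * (N : ℤ)) := by
  set x := τ.re with hx
  set y := τ.im with hy
  have hNR : (5:ℝ) ≤ (N:ℝ) := by exact_mod_cast hN
  have hNZ : (5:ℤ) ≤ (N:ℤ) := by exact_mod_cast hN
  rw [Complex.ext_iff] at heq
  obtain ⟨hre, him⟩ := heq
  simp only [pow_two, Complex.add_re, Complex.add_im, Complex.sub_re, Complex.sub_im,
    Complex.mul_re, Complex.mul_im, Complex.natCast_re, Complex.natCast_im,
    Complex.intCast_re, Complex.intCast_im, Complex.zero_re, Complex.zero_im,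
    ← hx, ← hy, mul_zero, zero_mul, sub_zero, zero_sub, add_zero, zero_add,
    neg_zero, neg_neg] at hre him
  have hy0 : y ≠ 0 := ne_of_gt hτ
  have hdetR : (p:ℝ) * s - (N:ℝ) * q * r' = 1 := by exact_mod_cast hdet
  -- imaginary part: y * (2*N*s*x - N*(r'+q)) = 0, so 2*N*s*x = N*(r'+q)
  have him' : 2 * ((N:ℝ) * s) * x = (N:ℝ) * ((r':ℝ) + q) := by
    have h0 : y * (2 * ((N:ℝ) * s) * x - (N:ℝ) * ((r':ℝ) + q)) = 0 := by
      linear_combination him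
    rcases mul_eq_zero.mp h0 with h | h
    · exact absurd h hy0
    · linarith
  have hrq : r' = q := by
    by_cases hs : s = 0
    · -- linear case: N*(r'+q) = 0 forces r' = -q, contradicting determinant
      have hsum : (N:ℝ) * ((r':ℝ) + q) = 0 := by
        rw [hs] at him'; push_cast at him'; linarith
      have hN0 : (N:ℝ) ≠ 0 := by positivity
      have hsum' : (r':ℝ) + q = 0 := by
        rcases mul_eq_zero.mp hsum with h | h
        · exact absurd h hN0
        · exact h
      have hsumZ : r' + q = 0 := by exact_mod_cast hsum'
      exfalso
      have hr' : r' = -q := by linarith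
      rw [hs, hr'] at hdet
      have hq : (N:ℤ) * q * q = 1 := by linarith
      have hq' : q ≤ -1 ∨ q = 0 ∨ 1 ≤ q := by omega
      rcases hq' with h | h | h
      · nlinarith [mul_nonneg (by linarith : (0:ℤ) ≤ (N:ℤ) - 5) (mul_self_nonneg q)]
      · rw [h] at hq; simp at hq
      · nlinarith [mul_nonneg (by linarith : (0:ℤ) ≤ (N:ℤ) - 5) (mul_self_nonneg q)]
    · have hsR : (s:ℝ) ≠ 0 := Int.cast_ne_zero.mpr hs
      have h1 : 2 * ((N:ℝ) * s) * x - (N:ℝ) * ((r':ℝ) + q) = 0 := by linarith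
      -- discriminant identity: B² - 4Ap = -4A²y²
      have hid : ((N:ℝ) * ((r':ℝ) + q)) ^ 2 - 4 * ((N:ℝ) * s) * p
          = -(4 * ((N:ℝ) * s) ^ 2 * y ^ 2) := by
        linear_combination (-(4 * ((N:ℝ) * s))) * hre +
          (2 * ((N:ℝ) * s) * x - (N:ℝ) * ((r':ℝ) + q)) * h1
      have hApos : 0 < 4 * ((N:ℝ) * s) ^ 2 * y ^ 2 := by
        have : ((N:ℝ) * s) ≠ 0 := mul_ne_zero (by positivity) hsR
        positivity
      have hdisc : ((N:ℝ) * ((r':ℝ) + q)) ^ 2 - 4 * ((N:ℝ) * s) * p < 0 := by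
        rw [hid]; linarith
      have key : (N:ℝ) * ((r':ℝ) - q) ^ 2 < 4 := by nlinarith [hdisc, hdetR, hNR]
      have keyZ : (N:ℤ) * (r' - q) ^ 2 < 4 := by exact_mod_cast key
      nlinarith [sq_nonneg (r' - q),
        mul_nonneg (by linarith : (0:ℤ) ≤ (N:ℤ) - 5) (sq_nonneg (r' - q))]
  refine ⟨hrq, ?_⟩
  subst hrq
  linear_combination (-(4 * (N:ℤ))) * hdet
end

section
/- Let N be a positive integer and let p, q, s be integers with ps − q²N = 1 and s > 0, and set τ = (qN + i√N)/(sN), a point of the upper half plane. Then the matrix γ = (p q; qN s) lies in Γ₀(N) (it has determinant 1 and lower-left entry divisible by N), and γ·W_N fixes τ, where W_N = (0 −1; N 0); explicitly, qN·τ − p = (sN·τ − qN)·τ. Hence every form [sN, −2qN, p] of discriminant −4N with ps − q²N = 1 and s > 0 gives rise to a fixed point of the full Atkin–Lehner involution W_N on X₀(N). -/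
/-! The matrix `γ·W_N = (qN -p; sN -qN)` fixes exactly the roots of the binary quadratic form
`[sN, -2qN, p]`, i.e. of `sN τ² - 2qN τ + p`. Its discriminant is `-4N(ps - q²N) = -4N
= (2i√N)²`, so the quadratic formula gives the root `τ = (qN + i√N)/(sN)`, whose imaginary part
`√N/(sN)` is positive. -/

open Complex

theorem discrim_eq_neg_four_mul_of_det_eq_one {R : Type*} [CommRing R] {N p q s : R}
    (hdet : p * s - q ^ 2 * N = 1) :
    discrim (s * N) (-(2 * q * N)) p = -4 * N := by
  unfold discrim
  linear_combination (-4 * N) * hdet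

theorem I_mul_sqrt_mul_self {x : ℝ} (hx : 0 ≤ x) : (I * √x) * (I * √x) = -x := by
  rw [mul_mul_mul_comm, I_mul_I, ← ofReal_mul, Real.mul_self_sqrt hx, neg_one_mul]

/-- Let `N > 0`, let `p, q, s` be integers with `ps - q²N = 1` and
`s > 0`, and set `τ = (qN + i√N)/(sN)`. Then `τ` lies in the upper half plane, the
matrix `γ = (p q; qN s)` lies in `Γ₀(N)` (determinant `1`, lower-left entry divisible
by `N`), and `γ·W_N = (qN -p; sN -qN)` fixes `τ`: explicitly `qN·τ - p = (sN·τ - qN)·τ`. -/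
theorem form_gives_fixed_point_full_AtkinLehner
    (N : ℕ) (hN : 0 < N) (p q s : ℤ)
    (hdet : p * s - q ^ 2 * (N : ℤ) = 1) (hs : 0 < s)
    (τ : ℂ)
    (hτ : τ = ((q : ℂ) * (N : ℂ) + Complex.I * (Real.sqrt N : ℂ)) / ((s : ℂ) * (N : ℂ))) :
    0 < τ.im ∧
    p * s - (q * (N : ℤ)) * q = 1 ∧
    (N : ℤ) ∣ (q * (N : ℤ)) ∧
    (q : ℂ) * (N : ℂ) * τ - (p : ℂ) = ((s : ℂ) * (N : ℂ) * τ - (q : ℂ) * (N : ℂ)) * τ := by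
  refine ⟨?_, by linear_combination hdet, dvd_mul_left _ _, ?_⟩
  · have hτ_real : τ = ((q * N : ℝ) + I * √N) / ((s * N : ℝ) : ℂ) := by
      rw [hτ]
      push_cast
      rfl
    rw [hτ_real, div_ofReal_im]
    simp only [add_im, ofReal_im, mul_im, I_re, I_im, ofReal_re, zero_mul, one_mul, zero_add]
    positivity
  · have hsN : (s : ℂ) * N ≠ 0 :=
      mul_ne_zero (Int.cast_ne_zero.2 hs.ne') (Nat.cast_ne_zero.2 hN.ne')
    have hdisc : discrim ((s : ℂ) * N) (-(2 * q * N)) p = (2 * (I * √N)) * (2 * (I * √N)) := by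
      rw [discrim_eq_neg_four_mul_of_det_eq_one (by exact_mod_cast hdet), mul_mul_mul_comm,
        I_mul_sqrt_mul_self (Nat.cast_nonneg N)]
      push_cast
      ring
    have hroot := (quadratic_eq_zero_iff hsN hdisc τ).2 <| Or.inl <| by
      rw [hτ, neg_neg, mul_assoc 2 (q : ℂ), ← mul_add, mul_div_mul_left _ _ two_ne_zero]
    linear_combination -hroot
end

section
/- Let N = 2M with M > 1 odd. Then ν(2) = 0 if and only if M has a prime factor p with p ≡ 7 (mod 8), or M has prime factors q and r with q ≡ 3 (mod 8) and r ≡ 5 (mod 8). -/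
/-- The number `ν(2)` of fixed points of the Atkin–Lehner involution `W₂` on
`X₀(2M)` (`M > 1` odd), given by the Fueter–Hijikata formula
`ν(2) = ∏_{p∣M}(1 + (-8/p)) + ∏_{p∣M}(1 + (-4/p))`; here the Legendre symbol at
the odd prime `p` is expressed via the Jacobi symbol. -/
def nu2 (M : ℕ) : ℤ :=
  ∏ p ∈ M.primeFactors, (1 + jacobiSym (-8) p) +
  ∏ p ∈ M.primeFactors, (1 + jacobiSym (-4) p)

lemma jac_neg_eight (p : ℕ) (hp : p.Prime) (h2 : p % 2 = 1) :
    jacobiSym (-8) p = if p % 8 = 1 ∨ p % 8 = 3 then 1 else -1 := by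
  have hodd : Odd p := Nat.odd_iff.mpr h2
  have hg : Int.gcd 2 p = 1 := by
    rw [show ((2:ℤ)) = ((2:ℕ):ℤ) by norm_num, Int.gcd_natCast_natCast]
    exact (Nat.coprime_primes Nat.prime_two hp).mpr (by rintro rfl; simp at h2)
  have : jacobiSym (-8) p = jacobiSym (-2) p := by
    rw [show ((-8:ℤ)) = -2 * 2^2 by ring, jacobiSym.mul_left,
      jacobiSym.sq_one' hg, mul_one]
  rw [this, jacobiSym.at_neg_two hodd, ZMod.χ₈'_nat_eq_if_mod_eight, if_neg (by omega)]

lemma jac_neg_four (p : ℕ) (hp : p.Prime) (h2 : p % 2 = 1) :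
    jacobiSym (-4) p = if p % 4 = 1 then 1 else -1 := by
  have hodd : Odd p := Nat.odd_iff.mpr h2
  have hg : Int.gcd 2 p = 1 := by
    rw [show ((2:ℤ)) = ((2:ℕ):ℤ) by norm_num, Int.gcd_natCast_natCast]
    exact (Nat.coprime_primes Nat.prime_two hp).mpr (by rintro rfl; simp at h2)
  have : jacobiSym (-4) p = jacobiSym (-1) p := by
    rw [show ((-4:ℤ)) = -1 * 2^2 by ring, jacobiSym.mul_left,
      jacobiSym.sq_one' hg, mul_one]
  rw [this, jacobiSym.at_neg_one hodd, ZMod.χ₄_nat_eq_if_mod_four, if_neg (by omega)]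

/-- For `N = 2M`, `M > 1` odd: `ν(2) = 0` iff `M` has a prime
factor `p ≡ 7 (mod 8)`, or prime factors `q ≡ 3` and `r ≡ 5 (mod 8)`. -/
theorem nu2_eq_zero_iff (M : ℕ) (hM : 1 < M) (hodd : Odd M) :
    nu2 M = 0 ↔
      (∃ p ∈ M.primeFactors, p % 8 = 7) ∨
      (∃ q ∈ M.primeFactors, ∃ r ∈ M.primeFactors, q % 8 = 3 ∧ r % 8 = 5) := by
  have hpm : ∀ p ∈ M.primeFactors, p % 2 = 1 := by
    intro p hp
    rcases Nat.mod_two_eq_zero_or_one p with h0 | h1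
    · exfalso
      have h2p : 2 ∣ p := Nat.dvd_of_mod_eq_zero h0
      have : 2 ∣ M := h2p.trans (Nat.dvd_of_mem_primeFactors hp)
      have := Nat.odd_iff.mp hodd
      omega
    · exact h1
  have key8 : ∀ p ∈ M.primeFactors,
      (1 + jacobiSym (-8) p = 0 ↔ p % 8 = 5 ∨ p % 8 = 7) ∧ 0 ≤ 1 + jacobiSym (-8) p := by
    intro p hp
    rw [jac_neg_eight p (Nat.prime_of_mem_primeFactors hp) (hpm p hp)]
    have := hpm p hp
    split <;> constructor <;> first | omega | norm_num
  have key4 : ∀ p ∈ M.primeFactors,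
      (1 + jacobiSym (-4) p = 0 ↔ p % 8 = 3 ∨ p % 8 = 7) ∧ 0 ≤ 1 + jacobiSym (-4) p := by
    intro p hp
    rw [jac_neg_four p (Nat.prime_of_mem_primeFactors hp) (hpm p hp)]
    have := hpm p hp
    split <;> constructor <;> first | omega | norm_num
  have h1 : (0:ℤ) ≤ ∏ p ∈ M.primeFactors, (1 + jacobiSym (-8) p) :=
    Finset.prod_nonneg fun p hp => (key8 p hp).2
  have h2 : (0:ℤ) ≤ ∏ p ∈ M.primeFactors, (1 + jacobiSym (-4) p) :=
    Finset.prod_nonneg fun p hp => (key4 p hp).2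
  unfold nu2
  rw [add_eq_zero_iff_of_nonneg h1 h2, Finset.prod_eq_zero_iff, Finset.prod_eq_zero_iff]
  constructor
  · rintro ⟨⟨p, hp, hp8⟩, ⟨q, hq, hq4⟩⟩
    rw [(key8 p hp).1] at hp8
    rw [(key4 q hq).1] at hq4
    rcases hp8 with h5 | h7
    · rcases hq4 with h3 | h7q
      · exact Or.inr ⟨q, hq, p, hp, h3, h5⟩
      · exact Or.inl ⟨q, hq, h7q⟩
    · exact Or.inl ⟨p, hp, h7⟩
  · rintro (⟨p, hp, h7⟩ | ⟨q, hq, r, hr, h3, h5⟩)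
    · exact ⟨⟨p, hp, (key8 p hp).1.mpr (Or.inr h7)⟩, ⟨p, hp, (key4 p hp).1.mpr (Or.inr h7)⟩⟩
    · exact ⟨⟨r, hr, (key8 r hr).1.mpr (Or.inl h5)⟩, ⟨q, hq, (key4 q hq).1.mpr (Or.inl h3)⟩⟩
end

section
/- Let N = 3M with M > 1 and gcd(3, M) = 1. Then ν(3) = 0 if and only if 8 divides M, or M has a prime factor p with p ≡ 5 (mod 12) or p ≡ 11 (mod 12). -/
/-- The number `ν(3)` of fixed points of the Atkin–Lehner involution `W₃` on
`X₀(3M)` (`M > 1`, `gcd(3,M) = 1`), by the Fueter–Hijikata formula: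
`ν(3) = c·∏_{p∣M, p odd}(1 + (-3/p)) + ∏_{p∣M}(1 + ε_p)`, where `c = 0` if
`8 ∣ M`, `c = 2` if `2 ∣ M` but `8 ∤ M`, `c = 1` if `M` is odd; `ε_p = (-3/p)`
for odd `p` (expressed via the Jacobi symbol) and `ε₂ = -1`. -/
def nu3 (M : ℕ) : ℤ :=
  (if 8 ∣ M then 0 else if 2 ∣ M then 2 else 1) *
    ∏ p ∈ M.primeFactors.filter (fun p => p ≠ 2), (1 + jacobiSym (-3) p) +
  ∏ p ∈ M.primeFactors, (1 + (if p = 2 then -1 else jacobiSym (-3) p))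

lemma jac_neg_three {p : ℕ} (hp : p.Prime) (h2 : p ≠ 2) (h3 : p ≠ 3) :
    jacobiSym (-3) p = if p % 12 = 5 ∨ p % 12 = 11 then -1 else 1 := by
  have hodd : p % 2 = 1 := hp.eq_two_or_odd.resolve_left h2
  have h3d : p % 3 ≠ 0 := by
    intro h
    exact h3 ((Nat.prime_dvd_prime_iff_eq (by norm_num) hp).mp
      (Nat.dvd_of_mod_eq_zero h)).symm
  have hmod := jacobiSym.mod_right (-3) (b := p) (Nat.odd_iff.mpr hodd)
  norm_num at hmod
  have h12 : p % 12 = 1 ∨ p % 12 = 5 ∨ p % 12 = 7 ∨ p % 12 = 11 := by omega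
  rcases h12 with h | h | h | h <;> rw [hmod, h] <;> norm_num

lemma factor_eq {p : ℕ} (hp : p.Prime) (h2 : p ≠ 2) (h3 : p ≠ 3) :
    1 + jacobiSym (-3) p = if p % 12 = 5 ∨ p % 12 = 11 then 0 else 2 := by
  rw [jac_neg_three hp h2 h3]
  split <;> ring

/-- For `N = 3M`, `M > 1`, `gcd(3,M) = 1`: `ν(3) = 0` iff
`8 ∣ M` or `M` has a prime factor `p ≡ 5` or `11 (mod 12)`. -/
theorem nu3_eq_zero_iff (M : ℕ) (hM : 1 < M) (hcop : Nat.gcd 3 M = 1) :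
    nu3 M = 0 ↔ 8 ∣ M ∨ ∃ p ∈ M.primeFactors, p % 12 = 5 ∨ p % 12 = 11 := by
  have hM0 : M ≠ 0 := by omega
  have h3M : ∀ p ∈ M.primeFactors, p ≠ 3 := by
    intro p hp h
    have hdvd : (3 : ℕ) ∣ M := h ▸ Nat.dvd_of_mem_primeFactors hp
    have : (3 : ℕ) ∣ 1 := hcop ▸ Nat.dvd_gcd dvd_rfl hdvd
    omega
  set P := ∏ p ∈ M.primeFactors.filter (fun p => p ≠ 2), (1 + jacobiSym (-3) p)
    with hP
  -- characterize when P = 0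
  have hPzero : P = 0 ↔ ∃ p ∈ M.primeFactors, p % 12 = 5 ∨ p % 12 = 11 := by
    rw [hP, Finset.prod_eq_zero_iff]
    constructor
    · rintro ⟨p, hpmem, hpz⟩
      rw [Finset.mem_filter] at hpmem
      obtain ⟨hpm, hp2⟩ := hpmem
      have hp := Nat.prime_of_mem_primeFactors hpm
      rw [factor_eq hp hp2 (h3M p hpm)] at hpz
      refine ⟨p, hpm, ?_⟩
      by_contra h
      rw [if_neg h] at hpz
      exact two_ne_zero hpz
    · rintro ⟨p, hpm, hmod⟩
      have hp := Nat.prime_of_mem_primeFactors hpm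
      have hp2 : p ≠ 2 := by rintro rfl; omega
      refine ⟨p, Finset.mem_filter.mpr ⟨hpm, hp2⟩, ?_⟩
      rw [factor_eq hp hp2 (h3M p hpm), if_pos hmod]
  by_cases h2M : 2 ∣ M
  · -- second product vanishes
    have h2mem : 2 ∈ M.primeFactors :=
      Nat.mem_primeFactors.mpr ⟨Nat.prime_two, h2M, hM0⟩
    have hQ : (∏ p ∈ M.primeFactors, (1 + (if p = 2 then -1 else jacobiSym (-3) p)))
        = 0 := Finset.prod_eq_zero h2mem (by norm_num)
    by_cases h8M : 8 ∣ M
    · simp only [nu3, if_pos h8M, hQ, zero_mul, add_zero]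
      exact iff_of_true trivial (Or.inl h8M)
    · simp only [nu3, if_neg h8M, if_pos h2M, hQ, add_zero]
      rw [mul_eq_zero]
      constructor
      · rintro (h | h)
        · norm_num at h
        · exact Or.inr (hPzero.mp h)
      · rintro (h | h)
        · exact absurd h h8M
        · exact Or.inr (hPzero.mpr h)
  · -- M odd: full product equals P
    have h2p : ∀ p ∈ M.primeFactors, p ≠ 2 := by
      intro p hp h
      exact h2M (h ▸ Nat.dvd_of_mem_primeFactors hp)
    have hfilter : M.primeFactors.filter (fun p => p ≠ 2) = M.primeFactors :=
      Finset.filter_eq_self.mpr h2p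
    have hQ : (∏ p ∈ M.primeFactors, (1 + (if p = 2 then -1 else jacobiSym (-3) p)))
        = P := by
      rw [hP, hfilter]
      exact Finset.prod_congr rfl fun p hp => by rw [if_neg (h2p p hp)]
    have h8M : ¬ 8 ∣ M := fun h => h2M (dvd_trans (by norm_num) h)
    simp only [nu3, if_neg h8M, if_neg h2M, hQ, one_mul, ← hP, ← two_mul]
    rw [mul_eq_zero]
    constructor
    · rintro (h | h)
      · norm_num at h
      · exact Or.inr (hPzero.mp h)
    · rintro (h | h)
      · exact absurd h h8M
      · exact Or.inr (hPzero.mpr h)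
end

section
/- Let N = 3M with M > 1 and gcd(3, M) = 1, and suppose ν(3) ≠ 0. Then ν(3) = 2^{s+1}, where s is the number of distinct prime factors p of M with p ≡ 1 (mod 12) or p ≡ 7 (mod 12). -/
lemma jac_neg3 {p : ℕ} (h2 : p % 2 = 1) (h3 : ¬ 3 ∣ p) :
    jacobiSym (-3) p = if p % 3 = 1 then 1 else -1 := by
  have hodd : Odd p := Nat.odd_iff.mpr h2
  have hmul : jacobiSym (-3) p = jacobiSym (-1) p * jacobiSym ((3:ℕ)) p := by
    rw [show ((-3 : ℤ)) = -1 * ((3:ℕ):ℤ) by norm_num, jacobiSym.mul_left]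
  have hqr : jacobiSym ((3:ℕ)) p = (-1) ^ (3 / 2 * (p / 2)) * jacobiSym (p) 3 :=
    jacobiSym.quadratic_reciprocity (by decide) hodd
  have hχ : jacobiSym (-1) p = ZMod.χ₄ p := jacobiSym.at_neg_one hodd
  have hmod : jacobiSym (p : ℤ) 3 = jacobiSym ((p % 3 : ℕ)) 3 := by
    rw [jacobiSym.mod_left]
    norm_cast
  have hsign : (ZMod.χ₄ p : ℤ) * (-1) ^ (3 / 2 * (p / 2)) = 1 := by
    rcases Nat.odd_mod_four_iff.mp h2 with h | h
    · rw [ZMod.χ₄_nat_one_mod_four h]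
      have : Even (3 / 2 * (p / 2)) := by
        rw [Nat.even_iff]; omega
      rw [this.neg_one_pow]; norm_num
    · rw [ZMod.χ₄_nat_three_mod_four h]
      have : Odd (3 / 2 * (p / 2)) := by
        rw [Nat.odd_iff]; omega
      rw [this.neg_one_pow]; norm_num
  have h13 : p % 3 = 1 ∨ p % 3 = 2 := by omega
  rw [hmul, hχ, hqr, hmod]
  rcases h13 with h | h
  · rw [h, if_pos rfl, Nat.cast_one, jacobiSym.one_left, mul_one]
    exact hsign
  · rw [h, if_neg (by norm_num)]
    have h23 : jacobiSym ((2:ℕ)) 3 = -1 := by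
      have hc : ((2:ℕ):ℤ) = 2 := by norm_cast
      rw [hc, jacobiSym.at_two (by decide : Odd 3)]; decide
    rw [h23, ← mul_assoc, hsign, one_mul]

/-- For `N = 3M`, `M > 1`, `gcd(3,M) = 1`, with `ν(3) ≠ 0`:
`ν(3) = 2^{s+1}`, where `s` counts the prime factors `p` of `M` with
`p ≡ 1` or `7 (mod 12)`. -/
theorem nu3_eq_of_ne_zero (M : ℕ) (hM : 1 < M) (hcop : Nat.gcd 3 M = 1)
    (hne : nu3 M ≠ 0) (s : ℕ)
    (hs : s = (M.primeFactors.filter (fun p => p % 12 = 1 ∨ p % 12 = 7)).card) :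
    nu3 M = 2 ^ (s + 1) := by
  have hM0 : M ≠ 0 := by omega
  -- primes dividing M are not divisible by 3
  have hp3 : ∀ p ∈ M.primeFactors, ¬ 3 ∣ p := by
    intro p hp h33
    have hdvd := Nat.dvd_of_mem_primeFactors hp
    have hprime := Nat.prime_of_mem_primeFactors hp
    have h3 : (3:ℕ) ∣ M := dvd_trans h33 hdvd
    have := Nat.dvd_gcd (dvd_refl 3) h3
    rw [hcop] at this
    exact absurd (Nat.le_of_dvd one_pos this) (by norm_num)
  -- the value of each factor for odd primes
  have hfac : ∀ p ∈ M.primeFactors.filter (fun p => p ≠ 2),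
      (1 + jacobiSym (-3) p) = if p % 3 = 1 then 2 else 0 := by
    intro p hp
    rw [Finset.mem_filter] at hp
    have hprime := Nat.prime_of_mem_primeFactors hp.1
    have h2 : p % 2 = 1 := Nat.odd_iff.mp (hprime.odd_of_ne_two hp.2)
    rw [jac_neg3 h2 (hp3 p hp.1)]
    split <;> norm_num
  set F := M.primeFactors with hF
  set Fo := F.filter (fun p => p ≠ 2) with hFo
  set P : ℤ := ∏ p ∈ Fo, (1 + jacobiSym (-3) p) with hP
  -- the second product vanishes if 2 ∣ M, else equals P
  have hsecond : (∏ p ∈ F, (1 + (if p = 2 then -1 else jacobiSym (-3) p)))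
      = if 2 ∣ M then 0 else P := by
    by_cases h2M : 2 ∣ M
    · rw [if_pos h2M]
      have h2F : 2 ∈ F := Nat.mem_primeFactors.mpr ⟨Nat.prime_two, h2M, hM0⟩
      exact Finset.prod_eq_zero h2F (by norm_num)
    · rw [if_neg h2M]
      have : Fo = F := by
        rw [hFo]
        apply Finset.filter_true_of_mem
        intro p hp
        intro h; subst h
        exact h2M (Nat.dvd_of_mem_primeFactors hp)
      rw [hP, this]
      apply Finset.prod_congr rfl
      intro p hp
      have : p ≠ 2 := by
        intro h; subst h; exact h2M (Nat.dvd_of_mem_primeFactors hp)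
      rw [if_neg this]
  -- 8 ∤ M, since otherwise nu3 M = 0
  have h8 : ¬ 8 ∣ M := by
    intro h8
    apply hne
    unfold nu3
    rw [if_pos h8, hsecond, if_pos (dvd_trans (by norm_num) h8), zero_mul, add_zero]
  -- nu3 M = 2 * P
  have hval : nu3 M = 2 * P := by
    unfold nu3
    rw [if_neg h8, hsecond]
    by_cases h2M : 2 ∣ M
    · rw [if_pos h2M, if_pos h2M, add_zero]
    · rw [if_neg h2M, if_neg h2M, one_mul, two_mul]
  have hPne : P ≠ 0 := by
    intro h
    exact hne (by rw [hval, h, mul_zero])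
  -- every factor of P is 2
  have hall : ∀ p ∈ Fo, (1 + jacobiSym (-3) p) = 2 := by
    intro p hp
    have hPne' : (∏ p ∈ Fo, (1 + jacobiSym (-3) p)) ≠ 0 := hPne
    have hne0 := Finset.prod_ne_zero_iff.mp hPne' p hp
    rw [hfac p hp] at hne0 ⊢
    by_cases h : p % 3 = 1
    · rw [if_pos h]
    · rw [if_neg h] at hne0; exact absurd rfl hne0
  -- the two filters agree
  have hsets : Fo = F.filter (fun p => p % 12 = 1 ∨ p % 12 = 7) := by
    rw [hFo]
    apply Finset.filter_congr
    intro p hp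
    have hprime := Nat.prime_of_mem_primeFactors hp
    constructor
    · intro h2
      have hmem : p ∈ Fo := Finset.mem_filter.mpr ⟨hp, h2⟩
      have h2' : p % 2 = 1 := Nat.odd_iff.mp (hprime.odd_of_ne_two h2)
      have := hall p hmem
      rw [hfac p hmem] at this
      have h3 : p % 3 = 1 := by
        by_contra h
        rw [if_neg h] at this
        norm_num at this
      omega
    · intro h
      omega
  have hcard : Fo.card = s := by rw [hsets, hs]
  have hprodP : P = 2 ^ s := by
    rw [hP, Finset.prod_congr rfl hall, Finset.prod_const, hcard]
  rw [hval, hprodP, pow_succ]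
  ring
end

section
/- Let N = 4M with M > 1 odd, and let s and t be the numbers of distinct prime factors p of M with p ≡ 1 (mod 4) and p ≡ 3 (mod 4) respectively. If M is not squarefree and M ≠ 9, then ν(4) > 4. If M is squarefree, then ν(4) > 4 if and only if 6s + 4t > 11. -/
/-- The number `ν(4)` of fixed points of the Atkin–Lehner involution `W₄` on
`X₀(4M)` (`M > 1` odd), by the Fueter–Hijikata formula:
`ν(4) = ∏_{p∣M}(1 + (-1/p)) + ∏_{p^k‖M}(p^⌊k/2⌋ + p^⌊(k-1)/2⌋)`, the Legendre
symbol `(-1/p) = (-4/p)` at the odd prime `p` being expressed via the Jacobi symbol. -/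
def nu4 (M : ℕ) : ℤ :=
  ∏ p ∈ M.primeFactors, (1 + jacobiSym (-4) p) +
  ∏ p ∈ M.primeFactors,
    ((p : ℤ) ^ (M.factorization p / 2) + (p : ℤ) ^ ((M.factorization p - 1) / 2))

/-!
Since `1 + (-1/p)` is `2` or `0` according as `p ≡ 1` or `3 (mod 4)`, the first product is
`2 ^ s * 0 ^ t`. Each factor of the second product is at least `2`, with equality exactly at the
primes `p ∥ M`, so for squarefree `M` we get `ν(4) = 2 ^ s * 0 ^ t + 2 ^ (s + t)` and the criterion
is arithmetic in `s, t`. If `q ^ k ∥ M` with `k ≥ 2`, the factor at `q` is at least `4`, and at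
least `5` unless `q ^ k = 9`; if `q ^ k = 9 ≠ M`, another prime factor contributes at least `2`.
-/

open Finset

lemma jacobiSym_neg_four {p : ℕ} (hp : Odd p) : jacobiSym (-4) p = ZMod.χ₄ p := by
  have h2 : Int.gcd 2 p = 1 := by simpa [Int.gcd] using Nat.coprime_two_left.mpr hp
  rw [show (-4 : ℤ) = -1 * 2 ^ 2 by norm_num, jacobiSym.mul_left, jacobiSym.sq_one' h2, mul_one,
    jacobiSym.at_neg_one hp]

lemma one_add_jacobiSym_neg_four {p : ℕ} (hp : Odd p) :
    1 + jacobiSym (-4) p = if p % 4 = 1 then 2 else 0 := by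
  rw [jacobiSym_neg_four hp]
  have : p % 4 = 1 ∨ p % 4 = 3 := by rcases hp with ⟨k, rfl⟩; omega
  rcases this with h | h
  · rw [ZMod.χ₄_nat_one_mod_four h, if_pos h]; rfl
  · rw [ZMod.χ₄_nat_three_mod_four h, if_neg (by omega)]; rfl

lemma filter_not_mod_four_eq_one {P : Finset ℕ} (hP : ∀ p ∈ P, Odd p) :
    {p ∈ P | ¬p % 4 = 1} = {p ∈ P | p % 4 = 3} :=
  filter_congr fun p hp => by rcases hP p hp with ⟨k, rfl⟩; omega

lemma card_filter_mod_four_add {P : Finset ℕ} (hP : ∀ p ∈ P, Odd p) :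
    #{p ∈ P | p % 4 = 1} + #{p ∈ P | p % 4 = 3} = #P := by
  rw [← filter_not_mod_four_eq_one hP, card_filter_add_card_filter_not]

lemma prod_one_add_jacobiSym_neg_four {P : Finset ℕ} (hP : ∀ p ∈ P, Odd p) :
    ∏ p ∈ P, (1 + jacobiSym (-4) p) = 2 ^ #{p ∈ P | p % 4 = 1} * 0 ^ #{p ∈ P | p % 4 = 3} := by
  rw [prod_congr rfl fun p hp => one_add_jacobiSym_neg_four (hP p hp), prod_ite, prod_const,
    prod_const, filter_not_mod_four_eq_one hP]

def primePowerFactor (p k : ℕ) : ℕ := p ^ (k / 2) + p ^ ((k - 1) / 2)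

lemma primePowerFactor_one (p : ℕ) : primePowerFactor p 1 = 2 := by
  simp [primePowerFactor]

lemma two_le_primePowerFactor {p : ℕ} (hp : 0 < p) (k : ℕ) : 2 ≤ primePowerFactor p k := by
  have := Nat.one_le_pow (k / 2) p hp
  have := Nat.one_le_pow ((k - 1) / 2) p hp
  unfold primePowerFactor; omega

lemma four_le_primePowerFactor {p k : ℕ} (hp : 3 ≤ p) (hk : 2 ≤ k) :
    4 ≤ primePowerFactor p k := by
  have := Nat.one_le_pow ((k - 1) / 2) p (by omega)
  have : p ≤ p ^ (k / 2) := le_self_pow₀ (by omega) (by omega)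
  unfold primePowerFactor; omega

lemma five_le_primePowerFactor {p k : ℕ} (hp : 3 ≤ p) (hk : 2 ≤ k) (h9 : p ^ k ≠ 9) :
    5 ≤ primePowerFactor p k := by
  by_cases hk2 : k = 2
  · subst hk2
    have : p ≠ 3 := by rintro rfl; exact h9 rfl
    simp only [primePowerFactor]; norm_num; omega
  · have : p ≤ p ^ (k / 2) := le_self_pow₀ (by omega) (by omega)
    have : p ≤ p ^ ((k - 1) / 2) := le_self_pow₀ (by omega) (by omega)
    unfold primePowerFactor; omega

lemma odd_of_mem_primeFactors {M p : ℕ} (hM : Odd M) (hp : p ∈ M.primeFactors) : Odd p :=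
  hM.of_dvd_nat (Nat.dvd_of_mem_primeFactors hp)

lemma nu4_eq {M : ℕ} (hM : Odd M) :
    nu4 M = ((2 ^ #{p ∈ M.primeFactors | p % 4 = 1} * 0 ^ #{p ∈ M.primeFactors | p % 4 = 3} +
      ∏ p ∈ M.primeFactors, primePowerFactor p (M.factorization p) : ℕ) : ℤ) := by
  rw [nu4, prod_one_add_jacobiSym_neg_four fun p hp => odd_of_mem_primeFactors hM hp]
  simp [primePowerFactor]

lemma prod_primePowerFactor_of_squarefree {M : ℕ} (hM : Squarefree M) :
    ∏ p ∈ M.primeFactors, primePowerFactor p (M.factorization p) = 2 ^ #M.primeFactors := by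
  rw [← prod_const]
  refine prod_congr rfl fun p hp => ?_
  rw [Nat.factorization_eq_one_of_squarefree hM (Nat.prime_of_mem_primeFactors hp)
    (Nat.dvd_of_mem_primeFactors hp), primePowerFactor_one]

lemma two_pow_card_le_prod_primePowerFactor (M : ℕ) (S : Finset ℕ) (hS : S ⊆ M.primeFactors) :
    2 ^ #S ≤ ∏ p ∈ S, primePowerFactor p (M.factorization p) :=
  pow_card_le_prod S _ 2 fun _ hp =>
    two_le_primePowerFactor (Nat.prime_of_mem_primeFactors (hS hp)).pos _

lemma five_le_prod_primePowerFactor {M : ℕ} (hM : Odd M) (hsf : ¬Squarefree M) (h9 : M ≠ 9) :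
    5 ≤ ∏ p ∈ M.primeFactors, primePowerFactor p (M.factorization p) := by
  have hM0 : M ≠ 0 := hM.pos.ne'
  obtain ⟨q, hq2⟩ : ∃ q, 2 ≤ M.factorization q := by
    by_contra! h
    exact hsf (Nat.squarefree_of_factorization_le_one hM0 fun p => by have := h p; omega)
  have hqM : q ∈ M.primeFactors := by
    rw [← Nat.support_factorization, Finsupp.mem_support_iff]; omega
  have hq3 : 3 ≤ q := by
    have := (Nat.prime_of_mem_primeFactors hqM).two_le
    rcases odd_of_mem_primeFactors hM hqM with ⟨k, rfl⟩; omega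
  rw [← mul_prod_erase _ _ hqM]
  rcases (M.primeFactors.erase q).eq_empty_or_nonempty with hrest | ⟨r, hr⟩
  · have hMq : M = q ^ M.factorization q := by
      have := Nat.prod_primeFactors_pow_factorization hM0
      rwa [← insert_erase hqM, hrest, insert_empty, prod_singleton] at this
    rw [hrest, prod_empty, mul_one]
    exact five_le_primePowerFactor hq3 hq2 (by rwa [← hMq])
  · have h4 := four_le_primePowerFactor hq3 hq2
    have h2 := two_pow_card_le_prod_primePowerFactor M _ (erase_subset q M.primeFactors)
    have : 2 ^ 1 ≤ 2 ^ #(M.primeFactors.erase q) :=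
      Nat.pow_le_pow_right (by norm_num) (card_pos.mpr ⟨r, hr⟩)
    nlinarith

lemma four_lt_two_pow_mul_zero_pow_add_two_pow_iff (s t : ℕ) :
    4 < 2 ^ s * 0 ^ t + 2 ^ (s + t) ↔ 11 < 6 * s + 4 * t := by
  rcases t with _ | t
  · have : 2 ^ 2 < 2 ^ (s + 1) ↔ 2 < s + 1 := Nat.pow_lt_pow_iff_right (by norm_num)
    rw [pow_succ] at this
    rw [pow_zero, mul_one, add_zero]
    omega
  · have : 2 ^ 2 < 2 ^ (s + (t + 1)) ↔ 2 < s + (t + 1) := Nat.pow_lt_pow_iff_right (by norm_num)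
    rw [zero_pow t.succ_ne_zero, mul_zero, zero_add]
    omega

theorem nu4_gt_four_general (M : ℕ) (hodd : Odd M)
    (s t : ℕ)
    (hs : s = (M.primeFactors.filter (fun p => p % 4 = 1)).card)
    (ht : t = (M.primeFactors.filter (fun p => p % 4 = 3)).card) :
    (¬ Squarefree M ∧ M ≠ 9 → 4 < nu4 M) ∧
    (Squarefree M → (4 < nu4 M ↔ 11 < 6 * s + 4 * t)) := by
  rw [nu4_eq hodd, ← hs, ← ht]
  refine ⟨fun ⟨hsf, h9⟩ => ?_, fun hsf => ?_⟩
  · have := five_le_prod_primePowerFactor hodd hsf h9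
    omega
  · rw [prod_primePowerFactor_of_squarefree hsf,
      ← card_filter_mod_four_add fun p hp => odd_of_mem_primeFactors hodd hp, ← hs, ← ht]
    exact_mod_cast four_lt_two_pow_mul_zero_pow_add_two_pow_iff s t

/-- For `N = 4M`, `M > 1` odd: if `M` is not squarefree and
`M ≠ 9` then `ν(4) > 4`; if `M` is squarefree then `ν(4) > 4 ↔ 6s + 4t > 11`,
where `s` and `t` count the prime factors of `M` congruent to `1` resp. `3 (mod 4)`. -/
theorem nu4_gt_four (M : ℕ) (hM : 1 < M) (hodd : Odd M)
    (s t : ℕ)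
    (hs : s = (M.primeFactors.filter (fun p => p % 4 = 1)).card)
    (ht : t = (M.primeFactors.filter (fun p => p % 4 = 3)).card) :
    (¬ Squarefree M ∧ M ≠ 9 → 4 < nu4 M) ∧
    (Squarefree M → (4 < nu4 M ↔ 11 < 6 * s + 4 * t)) :=
  nu4_gt_four_general M hodd s t hs ht
end

section
/- Let Q > 3 and M > 1 be integers with gcd(Q, M) = 1, and set N = QM. Then the following are equivalent: (a) there exist integers x, y, z, w and a complex number τ with positive imaginary part such that Q²xw − Nyz = Q and Qx·τ + y = (Nz·τ + Qw)·τ (i.e., some matrix (Qx y; Nz Qw) of determinant Q fixes a point of the upper half plane); (b) there exist integers x, y, z such that −Q²x² − Nyz = Q (i.e., W_Q can be represented by a matrix of the form (Qx y; Nz −Qx) of determinant Q). -/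
/-!
A matrix `(a b; c d)` with `c ≠ 0` fixes `τ` exactly when `w = 2cτ + d - a` satisfies
`w² = (a + d)² - 4 det`. For `τ` in the upper half plane `w` is not real, so a real `w²` is
negative: the matrix is elliptic, and conversely every elliptic one has such a fixed point.
For `(Qx y; Nz Qw)` of determinant `Q` this reads `Q (x + w)² < 4`, which forces `x + w = 0`
once `Q > 3`; the lower-left entry cannot vanish since `Q ∤ 1`.
-/

open Complex

theorem fixed_point_iff_sq_eq_discrim {K : Type*} [Field K] [NeZero (2 : K)]
    {a b c d : K} (hc : c ≠ 0) (τ : K) :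
    a * τ + b = (c * τ + d) * τ ↔ (2 * c * τ + d - a) ^ 2 = (a + d) ^ 2 - 4 * (a * d - b * c) := by
  have h4c : 2 * 2 * c ≠ 0 := mul_ne_zero (mul_ne_zero two_ne_zero two_ne_zero) hc
  constructor
  · intro h
    linear_combination (-4 * c) * h
  · intro h
    apply mul_left_cancel₀ h4c
    linear_combination -h

theorem Complex.lt_zero_of_sq_eq_ofReal {w : ℂ} {r : ℝ} (h : w ^ 2 = r) (him : w.im ≠ 0) : r < 0 := by
  have hre := congrArg re h
  have him' := congrArg im h
  simp only [sq, mul_re, mul_im, ofReal_re, ofReal_im] at hre him'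
  have hw : w.re = 0 := by
    have : 2 * w.re * w.im = 0 := by linarith
    simpa [him] using this
  rw [← hre, hw]
  nlinarith [mul_self_pos.mpr him]

theorem exists_fixed_point_im_pos_iff_sq_trace_lt {a b c d : ℝ} (hc : c ≠ 0) :
    (∃ τ : ℂ, 0 < τ.im ∧ (a : ℂ) * τ + b = (c * τ + d) * τ) ↔
      (a + d) ^ 2 < 4 * (a * d - b * c) := by
  have hcC : (c : ℂ) ≠ 0 := ofReal_ne_zero.mpr hc
  constructor
  · rintro ⟨τ, him, hfix⟩
    rw [fixed_point_iff_sq_eq_discrim hcC] at hfix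
    have hw : (2 * c * τ + d - a).im ≠ 0 := by
      simpa [hc] using him.ne'
    have hdisc := Complex.lt_zero_of_sq_eq_ofReal (r := (a + d) ^ 2 - 4 * (a * d - b * c))
      (by push_cast; exact hfix) hw
    linarith
  · intro hell
    set s := Real.sqrt (4 * (a * d - b * c) - (a + d) ^ 2)
    have hs : s ^ 2 = 4 * (a * d - b * c) - (a + d) ^ 2 := Real.sq_sqrt (by linarith)
    have hs0 : 0 < s := Real.sqrt_pos.mpr (by linarith)
    refine ⟨⟨(a - d) / (2 * c), s / (2 * |c|)⟩, by positivity, ?_⟩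
    have hw : 2 * (c : ℂ) * ⟨(a - d) / (2 * c), s / (2 * |c|)⟩ + d - a =
        (s * (c / |c|) : ℝ) * I := by
      apply Complex.ext
      · simp
        field_simp
        ring
      · simp
        field_simp
    have hsign : (c / |c|) ^ 2 = 1 := by rw [div_pow, sq_abs, div_self (pow_ne_zero 2 hc)]
    rw [fixed_point_iff_sq_eq_discrim hcC, hw, mul_pow, I_sq, ← ofReal_pow, mul_pow, hsign, hs]
    push_cast
    ring

theorem Int.eq_zero_of_sq_mul_lt_four_mul {Q t : ℤ} (hQ : 3 < Q) (h : (Q * t) ^ 2 < 4 * Q) :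
    t = 0 := by
  have ht : Q * t ^ 2 < 4 := by nlinarith
  have : t ^ 2 < 1 := by nlinarith [sq_nonneg t]
  exact pow_eq_zero_iff two_ne_zero |>.mp (by nlinarith [sq_nonneg t])

theorem Int.ne_zero_of_sq_mul_sub_mul_eq {Q x w b c : ℤ} (hQ : 1 < Q)
    (h : Q ^ 2 * x * w - b * c = Q) :
    c ≠ 0 := by
  rintro rfl
  have hxw : Q * (x * w) = 1 :=
    mul_left_cancel₀ (by omega : Q ≠ 0) (by linear_combination h)
  have := Int.eq_one_of_mul_eq_one_right (by omega) hxw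
  omega

theorem partial_AtkinLehner_fixed_point_iff_trace_zero_general
    (Q : ℤ) (hQ : 3 < Q) (N : ℤ) :
    (∃ x y z w : ℤ, ∃ τ : ℂ, Q ^ 2 * x * w - N * y * z = Q ∧ 0 < τ.im ∧
        ((Q : ℂ) * (x : ℂ)) * τ + (y : ℂ) =
          ((N : ℂ) * (z : ℂ) * τ + (Q : ℂ) * (w : ℂ)) * τ) ↔
    (∃ x y z : ℤ, -(Q ^ 2 * x ^ 2) - N * y * z = Q) := by
  constructor
  · rintro ⟨x, y, z, w, τ, hdet, him, hfix⟩
    have hNz : ((N * z : ℤ) : ℝ) ≠ 0 := by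
      exact_mod_cast Int.ne_zero_of_sq_mul_sub_mul_eq (Q := Q) (x := x) (w := w) (b := y)
        (by omega) (by linear_combination hdet)
    have hell := (exists_fixed_point_im_pos_iff_sq_trace_lt (a := ((Q * x : ℤ) : ℝ)) (b := y)
      (d := ((Q * w : ℤ) : ℝ)) hNz).1 ⟨τ, him, by push_cast; linear_combination hfix⟩
    have hellZ : (Q * x + Q * w) ^ 2 < 4 * (Q * x * (Q * w) - y * (N * z)) := by
      exact_mod_cast hell
    have hxw : x + w = 0 :=
      Int.eq_zero_of_sq_mul_lt_four_mul hQ (by linear_combination hellZ + 4 * hdet)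
    exact ⟨x, y, z, by linear_combination hdet - Q ^ 2 * x * hxw⟩
  · rintro ⟨x, y, z, hdet⟩
    have hNz : ((N * z : ℤ) : ℝ) ≠ 0 := by
      exact_mod_cast Int.ne_zero_of_sq_mul_sub_mul_eq (Q := Q) (x := x) (w := -x) (b := y)
        (by omega) (by linear_combination hdet)
    have hell : (Q * x + -(Q * x)) ^ 2 < 4 * (Q * x * -(Q * x) - y * (N * z)) := by linarith
    obtain ⟨τ, him, hfix⟩ := (exists_fixed_point_im_pos_iff_sq_trace_lt (a := ((Q * x : ℤ) : ℝ))
      (b := y) (d := ((-(Q * x) : ℤ) : ℝ)) hNz).2 (by exact_mod_cast hell)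
    refine ⟨x, y, z, -x, τ, by linear_combination hdet, him, ?_⟩
    push_cast at hfix ⊢
    linear_combination hfix

/-- Let `Q > 3`, `M > 1`, `gcd(Q,M) = 1`, `N = QM`. Then some
matrix `(Qx y; Nz Qw)` of determinant `Q` fixes a point of the upper half plane
iff `W_Q` can be represented by a matrix of the trace-zero form `(Qx y; Nz -Qx)`
of determinant `Q`, i.e. iff there are integers `x, y, z` with `-Q²x² - Nyz = Q`. -/
theorem partial_AtkinLehner_fixed_point_iff_trace_zero
    (Q M : ℤ) (hQ : 3 < Q) (hM : 1 < M) (hcop : Int.gcd Q M = 1)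
    (N : ℤ) (hN : N = Q * M) :
    (∃ x y z w : ℤ, ∃ τ : ℂ, Q ^ 2 * x * w - N * y * z = Q ∧ 0 < τ.im ∧
        ((Q : ℂ) * (x : ℂ)) * τ + (y : ℂ) =
          ((N : ℂ) * (z : ℂ) * τ + (Q : ℂ) * (w : ℂ)) * τ) ↔
    (∃ x y z : ℤ, -(Q ^ 2 * x ^ 2) - N * y * z = Q) :=
  partial_AtkinLehner_fixed_point_iff_trace_zero_general Q hQ N
end

section
/- Let Q > 3 and M > 1 be integers with gcd(Q, M) = 1, and set N = QM. Then there exist integers x, y, z with −Q²x² − Nyz = Q if and only if the congruence X² ≡ −Q (mod N) has an integer solution. -/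
/-- Let `Q > 3`, `M > 1`, `gcd(Q,M) = 1`, `N = QM`. Then there
are integers `x, y, z` with `-Q²x² - Nyz = Q` iff the congruence
`X² ≡ -Q (mod N)` has an integer solution. -/
theorem trace_zero_matrix_iff_congruence_solvable
    (Q M : ℤ) (hQ : 3 < Q) (hM : 1 < M) (hcop : Int.gcd Q M = 1)
    (N : ℤ) (hN : N = Q * M) :
    (∃ x y z : ℤ, -(Q ^ 2 * x ^ 2) - N * y * z = Q) ↔
    (∃ X : ℤ, N ∣ (X ^ 2 + Q)) := by
  subst hN
  constructor
  · rintro ⟨x, y, z, h⟩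
    exact ⟨Q * x, -(y * z), by linear_combination -h⟩
  · rintro ⟨X, k, hk⟩
    obtain ⟨a, b, hab⟩ := Int.isCoprime_iff_gcd_eq_one.mpr hcop
    refine ⟨a * X, -(Q ^ 2 * a ^ 2 * k + 2 * b - b ^ 2 * M), 1, ?_⟩
    linear_combination (-(Q ^ 2 * a ^ 2)) * hk + (Q * (Q * a + 1 - b * M)) * hab
end

section
/- Let Q > 4 and M > 1 be integers with gcd(Q, M) = 1, set N = QM, let s be the number of distinct primes dividing M, and assume the elliptic condition holds. If Q is even, or Q ≡ 3 (mod 8) and N is even, or Q ≡ 1 (mod 4) and N is odd, then ν(Q) = 2^s·h(−4Q). -/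
/-- For `d > 0` with `d ≡ 0` or `3 (mod 4)`, `hD d` is the class number `h(-d)`:
the number of reduced primitive positive definite binary quadratic forms
`[a,b,c]` of discriminant `b² - 4ac = -d`, i.e. triples with `a > 0`,
`gcd(a,b,c) = 1`, `|b| ≤ a ≤ c`, and `b ≥ 0` whenever `|b| = a` or `a = c`. -/
noncomputable def hD (d : ℕ) : ℕ :=
  Nat.card {t : ℤ × ℤ × ℤ //
    t.2.1 ^ 2 - 4 * t.1 * t.2.2 = -(d : ℤ) ∧ 0 < t.1 ∧
    Int.gcd (Int.gcd t.1 t.2.1 : ℤ) t.2.2 = 1 ∧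
    |t.2.1| ≤ t.1 ∧ t.1 ≤ t.2.2 ∧
    ((|t.2.1| = t.1 ∨ t.1 = t.2.2) → 0 ≤ t.2.1)}

/-- The quadratic character modulo 8: `χ₈ m = 1` if `m ≡ ±1 (mod 8)`, `-1` if
`m ≡ ±3 (mod 8)`, and `0` for even `m`. -/
def χ8 (m : ℤ) : ℤ :=
  if m % 8 = 1 ∨ m % 8 = 7 then 1 else if m % 8 = 3 ∨ m % 8 = 5 then -1 else 0

/-- The local factor `c₁(p)` of the Fueter–Hijikata formula for `ν(Q)` on `X₀(N)`;
for odd `p` the Legendre symbols `(-Q/p)`, `(-4Q/p)` are expressed via the Jacobi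
symbol. -/
def c1 (Q N p : ℕ) : ℤ :=
  if p = 2 then
    if Q % 4 = 1 then (if 4 ∣ N then 0 else 1)
    else if Q % 4 = 3 then
      (if 8 ∣ N then 3 * (1 + χ8 (-(Q : ℤ)))
       else if 4 ∣ N then 3 + χ8 (-(Q : ℤ))
       else 2)
    else 0
  else
    if Q % 4 = 3 then 1 + jacobiSym (-(Q : ℤ)) p
    else 1 + jacobiSym (-4 * (Q : ℤ)) p

/-- The local factor `c₂(p)` (only used when `Q ≡ 3 (mod 4)`). -/
def c2 (Q p : ℕ) : ℤ :=
  if p = 2 then 1 + χ8 (-(Q : ℤ)) else 1 + jacobiSym (-(Q : ℤ)) p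

/-- The number `ν(Q)` of fixed points of the Atkin–Lehner involution `W_Q` on
`X₀(N)`, `N = QM`, by the Fueter–Hijikata formula:
`ν(Q) = (∏_{p∣M} c₁(p))·h(-4Q) + [Q ≡ 3 (mod 4)]·(∏_{p∣M} c₂(p))·h(-Q)`. -/
noncomputable def nuQ (Q M : ℕ) : ℤ :=
  (∏ p ∈ M.primeFactors, c1 Q (Q * M) p) * (hD (4 * Q) : ℤ) +
  (if Q % 4 = 3 then (∏ p ∈ M.primeFactors, c2 Q p) * (hD Q : ℤ) else 0)

/-- The elliptic condition for `(N; Q)`, `N = QM`: the Legendre symbol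
`(-Q/p) = 1` for every odd prime `p ∣ M`, `Q ≡ 3 (mod 4)` whenever `4 ∣ M`, and
`Q ≡ 7 (mod 8)` whenever `8 ∣ M`. -/
def EllipticCond (Q M : ℕ) : Prop :=
  (∀ p : ℕ, ∀ hp : p.Prime, p ≠ 2 → p ∣ M → @legendreSym p ⟨hp⟩ (-(Q : ℤ)) = 1) ∧
  (4 ∣ M → Q % 4 = 3) ∧ (8 ∣ M → Q % 8 = 7)

/-- Let `Q > 4`, `M > 1`, `gcd(Q,M) = 1`, `N = QM`, let `s` be
the number of distinct primes dividing `M`, and assume the elliptic condition.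
If `Q` is even, or `Q ≡ 3 (mod 8)` and `N` is even, or `Q ≡ 1 (mod 4)` and `N`
is odd, then `ν(Q) = 2^s·h(-4Q)`. -/
theorem nuQ_case_other
    (Q M : ℕ) (hQ : 4 < Q) (hM : 1 < M) (hcop : Nat.Coprime Q M)
    (N : ℕ) (hN : N = Q * M) (s : ℕ) (hs : s = M.primeFactors.card)
    (hell : EllipticCond Q M)
    (hcase : Even Q ∨ (Q % 8 = 3 ∧ Even N) ∨ (Q % 4 = 1 ∧ Odd N)) :
    nuQ Q M = 2 ^ s * (hD (4 * Q) : ℤ) := by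
  obtain ⟨he1, he4, he8⟩ := hell
  subst hN
  subst hs
  have hg1 : Nat.gcd Q M = 1 := hcop
  have key : ∀ p ∈ M.primeFactors, c1 Q (Q * M) p = 2 := by
    intro p hpm
    obtain ⟨hp, hpM, -⟩ := Nat.mem_primeFactors.mp hpm
    by_cases hp2 : p = 2
    · subst hp2
      have h2M : 2 ∣ M := hpM
      have hQodd : ¬ 2 ∣ Q := by
        intro h
        have := Nat.dvd_gcd h h2M
        omega
      rcases hcase with hE | ⟨h83, hNe⟩ | ⟨h41, hNo⟩
      · exact absurd hE.two_dvd hQodd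
      · have hQ4 : Q % 4 = 3 := by omega
        have h8N : ¬ 8 ∣ Q * M := by
          intro h
          have hc2 : Nat.Coprime 2 Q := Nat.prime_two.coprime_iff_not_dvd.mpr hQodd
          have hc8 : Nat.Coprime 8 Q := by
            have := hc2.pow_left 3
            norm_num at this
            exact this
          have h8M : 8 ∣ M := hc8.dvd_of_dvd_mul_left h
          have := he8 h8M
          omega
        have h5 : (-(Q:ℤ)) % 8 = 5 := by omega
        by_cases h4N : 4 ∣ Q * M
        · simp [c1, hQ4, h8N, h4N, χ8, h5]
        · simp [c1, hQ4, h8N, h4N]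
      · have : 2 ∣ Q * M := h2M.mul_left Q
        rw [Nat.odd_iff] at hNo
        omega
    · have hleg := he1 p hp hp2 hpM
      have hjac : jacobiSym (-(Q:ℤ)) p = 1 := by
        rw [← @jacobiSym.legendreSym.to_jacobiSym p ⟨hp⟩]
        exact hleg
      by_cases hQ4 : Q % 4 = 3
      · simp [c1, hp2, hQ4, hjac]
      · have hcp : Nat.Coprime 2 p := (Nat.coprime_primes Nat.prime_two hp).mpr (Ne.symm hp2)
        have heq : (-(4 * (Q:ℤ))) = (2:ℤ)^2 * (-(Q:ℤ)) := by ring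
        have h4 : jacobiSym (-(4*(Q:ℤ))) p = 1 := by
          rw [heq, jacobiSym.mul_left, jacobiSym.sq_one' (by simpa [Int.gcd] using hcp),
            one_mul, hjac]
        simp [c1, hp2, hQ4, h4]
  have hprod : ∏ p ∈ M.primeFactors, c1 Q (Q * M) p = 2 ^ M.primeFactors.card := by
    rw [Finset.prod_congr rfl key, Finset.prod_const]
  unfold nuQ
  rw [hprod]
  by_cases hQ3 : Q % 4 = 3
  · rw [if_pos hQ3]
    rcases hcase with hE | ⟨h83, hNe⟩ | ⟨h41, _⟩
    · obtain ⟨k, hk⟩ := hE; omega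
    · have h2M : 2 ∣ M := (Nat.prime_two.dvd_mul.mp hNe.two_dvd).resolve_left (by omega)
      have h2mem : 2 ∈ M.primeFactors :=
        Nat.mem_primeFactors.mpr ⟨Nat.prime_two, h2M, by omega⟩
      have hc2 : c2 Q 2 = 0 := by
        have h5 : (-(Q:ℤ)) % 8 = 5 := by omega
        simp [c2, χ8, h5]
      rw [Finset.prod_eq_zero h2mem hc2]
      ring
    · omega
  · rw [if_neg hQ3]
    ring
end
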